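/- There exists ε₀ > 0 such that for every ε with 0 < ε ≤ ε₀ and every finite (ε/4)-net X of the circle S¹, the chromatic number of the ε-distance graph D_{X,ε}(2π/3) equals 4. -/

import Mathlib

/-- The circle `S¹ = ℝ/2πℤ` with its quotient metric. -/
abbrev Circle2 : Type := AddCircle (2 * Real.pi)

instance : Fact (0 < 2 * Real.pi) := ⟨by positivity⟩

/-- `X` is an `r`-net of the circle. -/
def cIsNet (r : ℝ) (X : Set Circle2) : Prop :=
  ∀ y : Circle2, ∃ x ∈ X, dist x y ≤ r

/-- The ε-distance graph with parameter α on a set `X ⊆ S¹`: distinct points are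
adjacent iff their distance lies in `[α - ε, α + ε]`. -/
def cDistGraph (X : Set Circle2) (α ε : ℝ) : SimpleGraph X where
  Adj x y := x ≠ y ∧ α - ε ≤ dist x.1 y.1 ∧ dist x.1 y.1 ≤ α + ε
  symm := by
    constructor
    intro x y h
    exact ⟨h.1.symm, by rw [dist_comm]; exact h.2.1, by rw [dist_comm]; exact h.2.2⟩
  loopless := ⟨fun x h => h.1 rfl⟩

/-- The ε-distance graph with parameter α on the whole circle `S¹`. -/
def cDistGraphAll (α ε : ℝ) : SimpleGraph Circle2 where
  Adj x y := x ≠ y ∧ α - ε ≤ dist x y ∧ dist x y ≤ α + ε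
  symm := by
    constructor
    intro x y h
    exact ⟨h.1.symm, by rw [dist_comm]; exact h.2.1, by rw [dist_comm]; exact h.2.2⟩
  loopless := ⟨fun x h => h.1 rfl⟩

/-! Colouring each point by the quarter-arc `[kπ/2, (k+1)π/2)` containing it is proper once
`2π/3 - ε ≥ π/2`. Conversely, net points near the other two vertices of the equilateral triangle
`a, a + 2π/3, a - 2π/3` are adjacent to each other and to every point within `3ε/4` of `a`, so a
3-colouring gives such nearby points the same colour. Walking from `0` to `2π/3` through net points
in steps of `3ε/4` then produces two adjacent points of the same colour. -/

open Real

theorem abs_dist_sub_le_of_dist_eq {M : Type*} [PseudoMetricSpace M] {x y x' y' : M}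
    {α r s : ℝ} (h : dist x y = α) (hx : dist x' x ≤ r) (hy : dist y' y ≤ s) :
    |dist x' y' - α| ≤ r + s := by
  have := dist_dist_dist_le x' y' x y
  rw [Real.dist_eq, h] at this
  linarith

namespace AddCircle

variable {p : ℝ}

theorem dist_coe_le_abs_sub (x y : ℝ) : dist (x : AddCircle p) y ≤ |x - y| := by
  rw [dist_eq_norm, ← coe_sub, ← Real.norm_eq_abs]
  exact QuotientAddGroup.norm_mk_le_norm

theorem norm_coe_of_nonneg_of_le_half (hp : 0 < p) {x : ℝ} (hx₀ : 0 ≤ x) (hx : x ≤ p / 2) :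
    ‖(x : AddCircle p)‖ = x := by
  rw [(norm_coe_eq_abs_iff p hp.ne').2 (by rwa [abs_of_nonneg hx₀, abs_of_pos hp]),
    abs_of_nonneg hx₀]

theorem exists_equilateral (hp : 0 < p) (a : AddCircle p) :
    ∃ b c : AddCircle p, dist a b = p / 3 ∧ dist a c = p / 3 ∧ dist b c = p / 3 := by
  set u : AddCircle p := ((p / 3 : ℝ) : AddCircle p)
  have hu : ‖u‖ = p / 3 := norm_coe_of_nonneg_of_le_half hp (by positivity) (by linarith)
  have huu : u + u = -u := by
    rw [eq_neg_iff_add_eq_zero, ← coe_add, ← coe_add, ← coe_period]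
    congr 1
    ring
  refine ⟨a + u, a + u + u, ?_, ?_, ?_⟩
  · rw [dist_self_add_right, hu]
  · rw [add_assoc, dist_self_add_right, huu, norm_neg, hu]
  · rw [dist_self_add_right, hu]

end AddCircle

theorem SimpleGraph.Coloring.fin_three_eq_of_adj_both_ends {V : Type*} {G : SimpleGraph V}
    (C : G.Coloring (Fin 3)) {a b z w : V} (haz : G.Adj a z) (haw : G.Adj a w)
    (hbz : G.Adj b z) (hbw : G.Adj b w) (hzw : G.Adj z w) : C a = C b := by
  have key : ∀ i j k l : Fin 3, i ≠ k → i ≠ l → j ≠ k → j ≠ l → k ≠ l → i = j := by decide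
  exact key _ _ _ _ (C.valid haz) (C.valid haw) (C.valid hbz) (C.valid hbw) (C.valid hzw)

theorem SimpleGraph.colorable_of_le_abs_sub_of_adj {V : Type*} {G : SimpleGraph V} {n : ℕ}
    {L : ℝ} (hL : 0 < L) (f : V → ℝ) (hf : ∀ v, f v ∈ Set.Ico 0 (n * L))
    (hadj : ∀ u v, G.Adj u v → L ≤ |f u - f v|) : G.Colorable n := by
  have floor_nonneg (v : V) : 0 ≤ ⌊f v / L⌋ := Int.floor_nonneg.2 (div_nonneg (hf v).1 hL.le)
  have floor_lt (v : V) : ⌊f v / L⌋ < n :=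
    Int.floor_lt.2 (by exact_mod_cast (div_lt_iff₀ hL).2 (hf v).2)
  let c (v : V) : Fin n := ⟨⌊f v / L⌋.toNat, by have := floor_lt v; have := floor_nonneg v; omega⟩
  refine ⟨SimpleGraph.Coloring.mk c fun {u v} huv hcol => ?_⟩
  have hfloor : ⌊f u / L⌋ = ⌊f v / L⌋ := by
    have hval : ⌊f u / L⌋.toNat = ⌊f v / L⌋.toNat := congrArg Fin.val hcol
    have := floor_nonneg u
    have := floor_nonneg v
    omega
  have := Int.abs_sub_lt_one_of_floor_eq_floor hfloor
  rw [← sub_div, abs_div, abs_of_pos hL, div_lt_one hL] at this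
  exact (hadj u v huv).not_gt this

section DistanceGraph

variable {X : Set Circle2} {ε : ℝ}

theorem cDistGraph_adj_of_abs_sub_le {α : ℝ} (hεα : ε < α) {u v : X}
    (h : |dist u.1 v.1 - α| ≤ ε) : (cDistGraph X α ε).Adj u v := by
  rw [abs_le] at h
  refine ⟨fun huv => ?_, by linarith, by linarith⟩
  rw [huv, dist_self] at h
  linarith

theorem cDistGraph_colorable_four (hε : ε ≤ π / 6) :
    (cDistGraph X (2 * π / 3) ε).Colorable 4 := by
  refine SimpleGraph.colorable_of_le_abs_sub_of_adj (by positivity : 0 < π / 2)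
    (fun x => (AddCircle.equivIco (2 * π) 0 x.1 : ℝ)) (fun x => ?_) (fun x y hxy => ?_)
  · obtain ⟨h₀, h⟩ := (AddCircle.equivIco (2 * π) 0 x.1).2
    exact ⟨h₀, h.trans_eq (by push_cast; ring)⟩
  · have hdist := AddCircle.dist_coe_le_abs_sub (p := 2 * π)
      (AddCircle.equivIco (2 * π) 0 x.1) (AddCircle.equivIco (2 * π) 0 y.1)
    rw [AddCircle.coe_equivIco, AddCircle.coe_equivIco] at hdist
    linarith [hxy.2.1]

theorem cDistGraph_coloring_eq_of_dist_le (hεα : ε < 2 * π / 3)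
    (hnet : cIsNet (ε / 4) X) (C : (cDistGraph X (2 * π / 3) ε).Coloring (Fin 3)) {a b : X}
    (hab : dist b.1 a.1 ≤ 3 * ε / 4) : C a = C b := by
  obtain ⟨p, q, hap, haq, hpq⟩ := AddCircle.exists_equilateral (by positivity) a.1
  obtain ⟨z, hzX, hz⟩ := hnet p
  obtain ⟨w, hwX, hw⟩ := hnet q
  have hε : 0 ≤ ε := by linarith [dist_nonneg (x := z) (y := p)]
  have adj {u v : X} {r s : ℝ} {x y : Circle2} (h : dist x y = 2 * π / 3) (hu : dist u.1 x ≤ r)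
      (hv : dist v.1 y ≤ s) (hrs : r + s ≤ ε) : (cDistGraph X (2 * π / 3) ε).Adj u v :=
    cDistGraph_adj_of_abs_sub_le hεα ((abs_dist_sub_le_of_dist_eq h hu hv).trans hrs)
  have had := (dist_self a.1).le
  exact C.fin_three_eq_of_adj_both_ends (z := ⟨z, hzX⟩) (w := ⟨w, hwX⟩)
    (adj hap had hz (by linarith)) (adj haq had hw (by linarith))
    (adj hap hab hz (by linarith)) (adj haq hab hw (by linarith)) (adj hpq hz hw (by linarith))

theorem cDistGraph_not_colorable_three (hε : 0 < ε) (hεα : ε < 2 * π / 3)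
    (hnet : cIsNet (ε / 4) X) : ¬(cDistGraph X (2 * π / 3) ε).Colorable 3 := by
  rintro ⟨C⟩
  obtain ⟨N, hN⟩ := exists_nat_ge (4 * (2 * π / 3) / ε)
  have hN₀ : (0 : ℝ) < N := lt_of_lt_of_le (by positivity) hN
  set t := 2 * π / 3 / N
  have ht₀ : 0 < t := by positivity
  have ht : t ≤ ε / 4 := by
    rw [div_le_iff₀ hN₀]
    rw [div_le_iff₀ hε] at hN
    linarith
  choose g hgX hg using fun j : ℕ => hnet ((j * t : ℝ) : Circle2)
  let v (j : ℕ) : X := ⟨g j, hgX j⟩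
  have hstep (j : ℕ) : C (v (j + 1)) = C (v j) := by
    refine (cDistGraph_coloring_eq_of_dist_le (a := v j) hεα hnet C ?_).symm
    have hmid : dist (((j + 1 : ℕ) * t : ℝ) : Circle2) ((j * t : ℝ) : Circle2) ≤ t := by
      refine (AddCircle.dist_coe_le_abs_sub _ _).trans_eq ?_
      rw [Nat.cast_succ, ← sub_mul, add_sub_cancel_left, one_mul, abs_of_pos ht₀]
    have := dist_triangle4 (g (j + 1)) (((j + 1 : ℕ) * t : ℝ) : Circle2)
      ((j * t : ℝ) : Circle2) (g j)
    linarith [hg (j + 1), hg j, dist_comm (g j) ((j * t : ℝ) : Circle2)]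
  have hconst (j : ℕ) : C (v j) = C (v 0) := by
    induction j with
    | zero => rfl
    | succ j ih => exact (hstep j).trans ih
  have hend : dist ((N * t : ℝ) : Circle2) (((0 : ℕ) * t : ℝ) : Circle2) = 2 * π / 3 := by
    rw [Nat.cast_zero, zero_mul, AddCircle.coe_zero, dist_zero_right, mul_div_cancel₀ _ hN₀.ne',
      AddCircle.norm_coe_of_nonneg_of_le_half (by positivity) (by positivity) (by linarith [pi_pos])]
  have hadj := cDistGraph_adj_of_abs_sub_le (u := v N) (v := v 0) hεα
    ((abs_dist_sub_le_of_dist_eq hend (hg N) (hg 0)).trans (by linarith))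
  exact C.valid hadj (hconst N)

end DistanceGraph

/-- the ε-distance graph with parameter `2π/3` on any finite `(ε/4)`-net of
`S¹` has chromatic number exactly `4` for all small `ε > 0`. -/
theorem stmt_13 :
    ∃ ε₀ > (0 : ℝ), ∀ ε : ℝ, 0 < ε → ε ≤ ε₀ →
      ∀ X : Set Circle2, X.Finite → cIsNet (ε / 4) X →
        (cDistGraph X (2 * Real.pi / 3) ε).chromaticNumber = 4 := by
  refine ⟨π / 6, by positivity, fun ε hε hε₀ X _ hnet => ?_⟩
  have hεα : ε < 2 * π / 3 := by linarith [pi_pos]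
  exact SimpleGraph.chromaticNumber_eq_iff_colorable_not_colorable (n := 3).2
    ⟨cDistGraph_colorable_four hε₀, cDistGraph_not_colorable_three hε hεα hnet⟩
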